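/- arXiv:1807.07604 — 2 statements merged into one kernel-verified Lean document; each statement's English description precedes it below -/
import Mathlib

section
/- Let f ∈ Z_p[[X]] be a nonzero power series with μ-invariant μ and λ-invariant λ (via Weierstrass preparation: f = p^μ · U · P with U a unit and P distinguished of degree λ). Then for all sufficiently large n, ord_p(f(ζ_{p^n} − 1)) = μ + λ/(p^n − p^{n−1}). -/
/-!
At a point `x` with `‖x‖ < 1` the series over `ℤ_[p]` converge absolutely, so evaluation is
multiplicative (Cauchy product) and `‖f(x)‖ = ‖p‖^μ · ‖U(x)‖ · ‖P(x)‖`. In the ultrametric field `K`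
the constant term of the unit `U` dominates, so `‖U(x)‖ = 1`; for the distinguished polynomial
the leading term `x^λ` dominates, because the other coefficients have norm at most `1/p`, which is
less than `‖x‖^λ = p^(-λ/(p^(n-1)(p-1)))` once `n > λ`.
-/

open PowerSeries

namespace PowerSeries

variable {R K : Type*} [CommRing R] [NormedField K] [Algebra R K]

noncomputable def tsumEval (x : K) (f : R⟦X⟧) : K :=
  ∑' k, algebraMap R K (coeff k f) * x ^ k

lemma tsumEval_coe (x : K) (P : Polynomial R) :
    tsumEval x (P : R⟦X⟧) = Polynomial.aeval x P := by
  rw [tsumEval, tsum_eq_sum (s := P.support) fun k hk => by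
      rw [Polynomial.coeff_coe, Polynomial.notMem_support_iff.mp hk, map_zero, zero_mul],
    Polynomial.aeval_def, Polynomial.eval₂_eq_sum, Polynomial.sum_def]
  simp only [Polynomial.coeff_coe]

lemma tsumEval_C (x : K) (a : R) : tsumEval x (C a) = algebraMap R K a := by
  simpa using tsumEval_coe x (Polynomial.C a)

variable {x : K} (hR : ∀ a : R, ‖algebraMap R K a‖ ≤ 1)
include hR

lemma norm_coeff_mul_pow_le (f : R⟦X⟧) (k : ℕ) :
    ‖algebraMap R K (coeff k f) * x ^ k‖ ≤ ‖x‖ ^ k := by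
  rw [norm_mul, norm_pow]
  exact mul_le_of_le_one_left (by positivity) (hR _)

variable (hx : ‖x‖ < 1)
include hx

lemma summable_norm_coeff_mul_pow (f : R⟦X⟧) :
    Summable fun k => ‖algebraMap R K (coeff k f) * x ^ k‖ :=
  .of_nonneg_of_le (fun _ => norm_nonneg _) (norm_coeff_mul_pow_le hR f)
    (summable_geometric_of_lt_one (norm_nonneg x) hx)

lemma tsumEval_mul [CompleteSpace K] (f g : R⟦X⟧) :
    tsumEval x (f * g) = tsumEval x f * tsumEval x g := by
  rw [tsumEval, tsumEval, tsumEval, tsum_mul_tsum_eq_tsum_sum_antidiagonal_of_summable_norm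
    (summable_norm_coeff_mul_pow hR hx f) (summable_norm_coeff_mul_pow hR hx g)]
  refine tsum_congr fun k => ?_
  rw [coeff_mul, map_sum, Finset.sum_mul]
  refine Finset.sum_congr rfl fun ij hij => ?_
  rw [← Finset.HasAntidiagonal.mem_antidiagonal.mp hij, pow_add, map_mul]
  ring

lemma norm_tsumEval_eq_one [CompleteSpace K] [IsUltrametricDist K] {f : R⟦X⟧}
    (hf : ‖algebraMap R K (constantCoeff f)‖ = 1) : ‖tsumEval x f‖ = 1 := by
  have htail : ‖∑' k, algebraMap R K (coeff (k + 1) f) * x ^ (k + 1)‖ < 1 :=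
    (IsUltrametricDist.norm_tsum_le_of_forall_le_of_nonneg (norm_nonneg x) fun k =>
      (norm_coeff_mul_pow_le hR f (k + 1)).trans
        (pow_le_of_le_one (norm_nonneg x) hx.le k.succ_ne_zero)).trans_lt hx
  rw [tsumEval, (summable_norm_coeff_mul_pow hR hx f).of_norm.tsum_eq_zero_add, pow_zero, mul_one,
    coeff_zero_eq_constantCoeff_apply, IsUltrametricDist.norm_add_eq_max_of_norm_ne_norm
      (hf ▸ htail.ne'), hf, max_eq_left htail.le]

end PowerSeries

lemma IsUltrametricDist.norm_add_eq_left {E : Type*} [SeminormedAddCommGroup E]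
    [IsUltrametricDist E]
    {a b : E} (h : ‖b‖ < ‖a‖) : ‖a + b‖ = ‖a‖ := by
  rw [norm_add_eq_max_of_norm_ne_norm h.ne', max_eq_left h.le]

lemma Polynomial.Monic.norm_aeval_eq_norm_pow {R K : Type*} [CommRing R] [NormedField K]
    [IsUltrametricDist K] [Algebra R K] {P : Polynomial R} (hP : P.Monic) {x : K} (hx : ‖x‖ ≤ 1)
    (hcoeff : ∀ i < P.natDegree, ‖algebraMap R K (P.coeff i)‖ < ‖x‖ ^ P.natDegree) :
    ‖aeval x P‖ = ‖x‖ ^ P.natDegree := by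
  have hlower : ‖∑ i ∈ Finset.range P.natDegree, algebraMap R K (P.coeff i) * x ^ i‖ <
      ‖x‖ ^ P.natDegree := by
    rcases (Finset.range P.natDegree).eq_empty_or_nonempty with hempty | hne
    · simp [Finset.range_eq_empty_iff.mp hempty]
    obtain ⟨i, hi, hle⟩ := IsUltrametricDist.exists_norm_finsetSum_le_of_nonempty hne
      fun i => algebraMap R K (P.coeff i) * x ^ i
    refine hle.trans_lt ?_
    rw [norm_mul, norm_pow]
    exact (mul_le_of_le_one_right (norm_nonneg _) (pow_le_one₀ (norm_nonneg x) hx)).trans_lt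
      (hcoeff i (Finset.mem_range.mp hi))
  conv_lhs => rw [hP.as_sum]
  simp only [map_add, map_pow, aeval_X, map_sum, map_mul, aeval_C]
  rw [IsUltrametricDist.norm_add_eq_left (by rwa [norm_pow]), norm_pow]

lemma PadicInt.norm_le_inv_of_norm_lt_one {p : ℕ} [Fact p.Prime] {a : ℤ_[p]} (h : ‖a‖ < 1) :
    ‖a‖ ≤ (p : ℝ)⁻¹ := by
  simpa using (PadicInt.norm_lt_pow_iff_norm_le_pow_sub_one a 0).mp (by simpa using h)

lemma PadicInt.norm_aeval_of_monic_of_norm_coeff_lt_one {p : ℕ} [Fact p.Prime] {K : Type*}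
    [NormedField K] [IsUltrametricDist K] [Algebra ℤ_[p] K]
    (halg : ∀ a : ℤ_[p], ‖algebraMap ℤ_[p] K a‖ = ‖a‖) {P : Polynomial ℤ_[p]} (hP : P.Monic)
    (hcoeff : ∀ i < P.natDegree, ‖P.coeff i‖ < 1) {x : K} (hx : ‖x‖ ≤ 1)
    (hxp : (p : ℝ)⁻¹ < ‖x‖ ^ P.natDegree) :
    ‖Polynomial.aeval x P‖ = ‖x‖ ^ P.natDegree :=
  hP.norm_aeval_eq_norm_pow hx fun i hi =>
    (halg _).trans_le (norm_le_inv_of_norm_lt_one (hcoeff i hi)) |>.trans_lt hxp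

lemma isUltrametricDist_of_norm_algebraMap_padicInt {p : ℕ} [Fact p.Prime] {K : Type*}
    [NormedField K] [Algebra ℤ_[p] K] (halg : ∀ a : ℤ_[p], ‖algebraMap ℤ_[p] K a‖ = ‖a‖) :
    IsUltrametricDist K :=
  IsUltrametricDist.isUltrametricDist_of_forall_norm_natCast_le_one fun m => by
    rw [← map_natCast (algebraMap ℤ_[p] K) m, halg]
    exact PadicInt.norm_le_one _

lemma natCast_lt_pow_pred_mul_sub_one {p : ℝ} (hp : 2 ≤ p) {m n : ℕ} (h : m < n) :
    (m : ℝ) < p ^ (n - 1) * (p - 1) :=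
  calc (m : ℝ) < n := by exact_mod_cast h
    _ ≤ 2 ^ (n - 1) := by
      have := Nat.lt_two_pow_self (n := n - 1)
      exact_mod_cast (by omega : n ≤ 2 ^ (n - 1))
    _ ≤ p ^ (n - 1) := pow_le_pow_left₀ zero_le_two hp _
    _ ≤ p ^ (n - 1) * (p - 1) := le_mul_of_one_le_right (by positivity) (by linarith)

theorem stmt5_general (p : ℕ) [Fact p.Prime]
    (K : Type) [NormedField K] [CompleteSpace K] [Algebra ℤ_[p] K]
    (halg : ∀ a : ℤ_[p], ‖algebraMap ℤ_[p] K a‖ = ‖a‖)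
    (f : PowerSeries ℤ_[p])
    (μ lam : ℕ) (U : (PowerSeries ℤ_[p])ˣ) (P : Polynomial ℤ_[p])
    (hPmonic : P.Monic) (hPdeg : P.natDegree = lam)
    (hPdist : ∀ i < lam, ‖P.coeff i‖ < 1)
    (hfact : f = (p : PowerSeries ℤ_[p]) ^ μ * (U : PowerSeries ℤ_[p]) * (P : PowerSeries ℤ_[p])) :
    ∃ N : ℕ, ∀ n ≥ N, ∀ ζ : K, IsPrimitiveRoot ζ (p ^ n) →
      ‖ζ - 1‖ = (p : ℝ) ^ (-(1 / ((p : ℝ) ^ (n - 1) * ((p : ℝ) - 1)))) →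
      ‖∑' k : ℕ, algebraMap ℤ_[p] K (PowerSeries.coeff (R := ℤ_[p]) k f) * (ζ - 1) ^ k‖ =
        (p : ℝ) ^ (-((μ : ℝ) + (lam : ℝ) / ((p : ℝ) ^ n - (p : ℝ) ^ (n - 1)))) := by
  have := isUltrametricDist_of_norm_algebraMap_padicInt halg
  have hR (a : ℤ_[p]) : ‖algebraMap ℤ_[p] K a‖ ≤ 1 := (halg a).trans_le (PadicInt.norm_le_one a)
  have hp : (2 : ℝ) ≤ p := by exact_mod_cast (Fact.out : p.Prime).two_le
  refine ⟨lam + 1, fun n hn ζ _ hζ => ?_⟩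
  set D : ℝ := (p : ℝ) ^ (n - 1) * ((p : ℝ) - 1)
  have hD : (lam : ℝ) < D := natCast_lt_pow_pred_mul_sub_one hp hn
  have hD0 : 0 < D := lam.cast_nonneg.trans_lt hD
  have hx : ‖ζ - 1‖ < 1 := by
    rw [hζ]; exact Real.rpow_lt_one_of_one_lt_of_neg (by linarith) (by simp; positivity)
  have hxlam : ‖ζ - 1‖ ^ lam = (p : ℝ) ^ (-(lam / D)) := by
    rw [hζ, ← Real.rpow_natCast, ← Real.rpow_mul (by positivity)]; ring_nf
  have hPnorm : ‖Polynomial.aeval (ζ - 1) P‖ = ‖ζ - 1‖ ^ lam := by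
    subst hPdeg
    refine PadicInt.norm_aeval_of_monic_of_norm_coeff_lt_one halg hPmonic hPdist hx.le ?_
    rw [hxlam, ← Real.rpow_neg_one, Real.rpow_lt_rpow_left_iff (by linarith), neg_lt_neg_iff,
      div_lt_one hD0]
    exact hD
  have hUnorm : ‖tsumEval (ζ - 1) (U : ℤ_[p]⟦X⟧)‖ = 1 :=
    norm_tsumEval_eq_one hR hx
      (by rw [halg]; exact PadicInt.isUnit_iff.mp (U.isUnit.map constantCoeff))
  have hpnorm : ‖tsumEval (ζ - 1) ((p : ℤ_[p]⟦X⟧) ^ μ)‖ = (p : ℝ) ^ (-(μ : ℝ)) := by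
    rw [← map_natCast (C (R := ℤ_[p])), ← map_pow, tsumEval_C, halg, PadicInt.norm_p_pow,
      Real.rpow_neg (by positivity), Real.rpow_natCast, zpow_neg, zpow_natCast]
  have hD_eq : (p : ℝ) ^ n - (p : ℝ) ^ (n - 1) = D := by
    obtain ⟨m, rfl⟩ : ∃ m, n = m + 1 := ⟨n - 1, by omega⟩
    simp only [D, Nat.add_sub_cancel, pow_succ]; ring
  change ‖tsumEval (ζ - 1) f‖ = _
  rw [hfact, tsumEval_mul hR hx, tsumEval_mul hR hx, tsumEval_coe, norm_mul, norm_mul, hpnorm,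
    hUnorm, hPnorm, hxlam, hD_eq, mul_one, ← Real.rpow_add (by positivity), neg_add]

/-- Let `f ∈ ℤ_p[[X]]` be nonzero with Weierstrass factorization `f = p^μ · U · P`,
`U` a unit and `P` distinguished of degree `λ`.  Then, evaluating `f` (as a convergent
series in a complete normed field `K` extending `ℤ_p` isometrically) at `ζ_{p^n} - 1`
for `ζ_{p^n}` a primitive `p^n`-th root of unity (which has
`ord_p(ζ_{p^n} - 1) = 1/(p^{n-1}(p-1))`, i.e. `‖ζ_{p^n}-1‖ = p^{-1/(p^{n-1}(p-1))}`),
one has, for all sufficiently large `n`,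
`ord_p (f(ζ_{p^n} - 1)) = μ + λ/(p^n - p^{n-1})`, stated here multiplicatively as
`‖f(ζ_{p^n}-1)‖ = p^{-(μ + λ/(p^n - p^{n-1}))}`. -/
theorem stmt5 (p : ℕ) [Fact p.Prime]
    (K : Type) [NormedField K] [CompleteSpace K] [Algebra ℤ_[p] K]
    (halg : ∀ a : ℤ_[p], ‖algebraMap ℤ_[p] K a‖ = ‖a‖)
    (f : PowerSeries ℤ_[p]) (hf : f ≠ 0)
    (μ lam : ℕ) (U : (PowerSeries ℤ_[p])ˣ) (P : Polynomial ℤ_[p])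
    (hPmonic : P.Monic) (hPdeg : P.natDegree = lam)
    (hPdist : ∀ i < lam, ‖P.coeff i‖ < 1)
    (hfact : f = (p : PowerSeries ℤ_[p]) ^ μ * (U : PowerSeries ℤ_[p]) * (P : PowerSeries ℤ_[p])) :
    ∃ N : ℕ, ∀ n ≥ N, ∀ ζ : K, IsPrimitiveRoot ζ (p ^ n) →
      ‖ζ - 1‖ = (p : ℝ) ^ (-(1 / ((p : ℝ) ^ (n - 1) * ((p : ℝ) - 1)))) →
      ‖∑' k : ℕ, algebraMap ℤ_[p] K (PowerSeries.coeff (R := ℤ_[p]) k f) * (ζ - 1) ^ k‖ =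
        (p : ℝ) ^ (-((μ : ℝ) + (lam : ℝ) / ((p : ℝ) ^ n - (p : ℝ) ^ (n - 1)))) :=
  stmt5_general p K halg f μ lam U P hPmonic hPdeg hPdist hfact
end

section
/- Let G ≅ Z_p act on a module M ≅ (Q_p/Z_p)^t × F with F finite, via a topological generator γ, such that the fixed points of (γ−1) acting on M form a finite group. Then the maximal divisible subgroup M_div = (Q_p/Z_p)^t satisfies M_div ⊆ (γ−1)M, and hence the cokernel M/(γ−1)M has order bounded by [M : M_div] = |F|, independent of the choice of γ (i.e., H^1(⟨γ⟩, M) ≅ M/(γ−1)M is finite of order at most |F|). -/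
/-- The additive subgroup `ℤ_p ⊆ ℚ_p`. -/
noncomputable def zpInQp (p : ℕ) [Fact p.Prime] : AddSubgroup ℚ_[p] :=
  (PadicInt.Coe.ringHom (p := p)).range.toAddSubgroup

/-- The `p`-divisible group `ℚ_p/ℤ_p`. -/
abbrev qpModZp (p : ℕ) [Fact p.Prime] : Type := ℚ_[p] ⧸ zpInQp p

/-!
Let `D ≅ (ℚ_p/ℤ_p)^t` be the divisible part and `k = |ker σ|`. Any `y ∈ D` is `k! • z` with
`z ∈ D`, and `z` lies in the `p^m`-torsion `T` of `M` for some `m`. This `T` is finite and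
σ-stable, so `[T : σ T] = |ker σ|_T| ≤ k` divides `k!`, hence `y = k! • z ∈ σ T`.
The cokernel of σ is then a quotient of `M / D ≅ F`.
-/

open AddSubgroup Nat

namespace AddSubgroup

theorem factorial_nsmul_mem_range {G : Type*} [AddCommGroup G] [Finite G] (f : G →+ G) {k : ℕ}
    (hk : Nat.card f.ker ≤ k) (x : G) : k ! • x ∈ f.range := by
  obtain ⟨c, hc⟩ := Nat.dvd_factorial (Nat.pos_of_ne_zero f.range.index_ne_zero_of_finite)
    (index_range.trans_le hk)
  rw [hc, mul_nsmul]
  exact nsmul_mem (f.range.nsmul_index_mem x) c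

theorem factorial_card_ker_nsmul_mem_range {M : Type*} [AddCommGroup M] (f : M →+ M)
    [Finite f.ker] {T : AddSubgroup M} [Finite T] (hT : ∀ x ∈ T, f x ∈ T) {x : M} (hx : x ∈ T) :
    (Nat.card f.ker) ! • x ∈ f.range := by
  let fT : T →+ T := (f.domRestrict T).codRestrict T fun y => hT y y.2
  have hker : Nat.card fT.ker ≤ Nat.card f.ker :=
    Nat.card_le_card_of_injective (fun y => ⟨y.1.1, congrArg Subtype.val y.2⟩)
      fun y z h => Subtype.ext (Subtype.ext (Subtype.mk.inj h))
  obtain ⟨w, hw⟩ := factorial_nsmul_mem_range fT hker ⟨x, hx⟩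
  exact ⟨w, congrArg Subtype.val hw⟩

theorem le_range_of_divisible {M : Type*} [AddCommGroup M] (f : M →+ M) [Finite f.ker]
    {D : AddSubgroup M} (hdiv : ∀ n ≠ 0, ∀ y ∈ D, ∃ z ∈ D, n • z = y)
    (htors : ∀ x ∈ D, ∃ n : ℕ, n • x = 0 ∧ {y : M | n • y = 0}.Finite) : D ≤ f.range := by
  intro y hy
  obtain ⟨z, hz, rfl⟩ := hdiv _ (factorial_ne_zero (Nat.card f.ker)) y hy
  obtain ⟨n, hzn, hfin⟩ := htors z hz
  have : Finite (torsionBy M n) := (hfin.subset fun y hy => torsionBy.nsmul_iff.1 hy).to_subtype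
  refine factorial_card_ker_nsmul_mem_range f (fun x hx => ?_) (torsionBy.nsmul_iff.2 hzn)
  rw [torsionBy.nsmul_iff, ← map_nsmul, torsionBy.nsmul_iff.1 hx, map_zero]

theorem card_quotient_le_of_ker_le {M F : Type*} [AddCommGroup M] [AddCommGroup F] [Finite F]
    (ψ : M →+ F) {H : AddSubgroup M} (h : ψ.ker ≤ H) : Nat.card (M ⧸ H) ≤ Nat.card F :=
  calc H.index ≤ ψ.ker.index := index_antitone h
    _ = Nat.card ψ.range := index_ker ψ
    _ ≤ Nat.card F := Nat.card_le_card_of_injective _ Subtype.val_injective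

end AddSubgroup

noncomputable instance Padic.divisibleByNat (p : ℕ) [Fact p.Prime] : DivisibleBy ℚ_[p] ℕ :=
  AddGroup.divisibleByNatOfDivisibleByInt _

namespace qpModZp

variable {p : ℕ} [Fact p.Prime]

theorem mk_eq_zero_iff {q : ℚ_[p]} : (q : qpModZp p) = 0 ↔ ‖q‖ ≤ 1 := by
  rw [QuotientAddGroup.eq_zero_iff]
  exact ⟨fun ⟨a, ha⟩ => ha ▸ a.2, fun h => ⟨⟨q, h⟩, rfl⟩⟩

theorem exists_pow_nsmul_eq_zero (x : qpModZp p) : ∃ m : ℕ, p ^ m • x = 0 := by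
  obtain ⟨q, rfl⟩ := QuotientAddGroup.mk_surjective x
  have hp : (1 : ℝ) < p := by exact_mod_cast (Fact.out : p.Prime).one_lt
  obtain ⟨m, hm⟩ := pow_unbounded_of_one_lt ‖q‖ hp
  refine ⟨m, ?_⟩
  rw [← QuotientAddGroup.mk_nsmul, mk_eq_zero_iff, nsmul_eq_mul, norm_mul, Nat.cast_pow,
    norm_pow, Padic.norm_p, inv_pow, inv_mul_le_iff₀ (pow_pos (zero_lt_one.trans hp) m), mul_one]
  exact hm.le

theorem finite_setOf_pow_nsmul_eq_zero (m : ℕ) : {x : qpModZp p | p ^ m • x = 0}.Finite := by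
  have hpm : (p : ℚ_[p]) ^ m ≠ 0 := pow_ne_zero _ (Nat.cast_ne_zero.2 (Fact.out : p.Prime).ne_zero)
  refine (Set.finite_range fun r : Fin (p ^ m) => ((r / p ^ m : ℚ_[p]) : qpModZp p)).subset ?_
  rintro x hx
  obtain ⟨q, rfl⟩ := QuotientAddGroup.mk_surjective x
  obtain ⟨a, ha⟩ : p ^ m • q ∈ zpInQp p := by
    rwa [Set.mem_ofPred, ← QuotientAddGroup.mk_nsmul, QuotientAddGroup.eq_zero_iff] at hx
  -- `q = a / p^m` with `a ∈ ℤ_p`, and `a ≡ a.appr m` modulo `p^m ℤ_p`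
  obtain ⟨b, hb⟩ := Ideal.mem_span_singleton.1 (a.appr_spec m)
  refine ⟨⟨a.appr m, a.appr_lt m⟩, QuotientAddGroup.eq.2 ⟨b, ?_⟩⟩
  have hab := congrArg ((↑) : ℤ_[p] → ℚ_[p]) hb
  push_cast at hab
  change (a : ℚ_[p]) = p ^ m • q at ha
  change (b : ℚ_[p]) = -((a.appr m : ℕ) / p ^ m) + q
  rw [nsmul_eq_mul, Nat.cast_pow] at ha
  field_simp
  linear_combination -hab + ha

end qpModZp

theorem Pi.exists_pow_nsmul_eq_zero {ι A : Type*} [Finite ι] [AddMonoid A] {p : ℕ}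
    (h : ∀ a : A, ∃ m : ℕ, p ^ m • a = 0) (v : ι → A) : ∃ m : ℕ, p ^ m • v = 0 := by
  choose m hm using fun i => h (v i)
  obtain ⟨N, hN⟩ := Finite.exists_le m
  refine ⟨N, funext fun i => ?_⟩
  obtain ⟨k, hk⟩ := Nat.exists_eq_add_of_le (hN i)
  rw [Pi.smul_apply, hk, pow_add, mul_nsmul, hm i, nsmul_zero, Pi.zero_apply]

theorem qpModZp.finite_setOf_pow_nsmul_eq_zero_of_addEquiv {p : ℕ} [Fact p.Prime]
    {ι M F : Type*} [Finite ι] [AddCommGroup M] [AddCommGroup F] [Finite F]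
    (e : M ≃+ (ι → qpModZp p) × F) (m : ℕ) : {y : M | p ^ m • y = 0}.Finite := by
  refine (((Set.Finite.pi' fun _ => finite_setOf_pow_nsmul_eq_zero m).prod Set.finite_univ).preimage
    e.injective.injOn).subset fun y hy => ⟨fun i => ?_, trivial⟩
  change p ^ m • (e y).1 i = 0
  rw [← Pi.smul_apply, ← Prod.smul_fst, ← map_nsmul, hy.out, map_zero, Prod.fst_zero,
    Pi.zero_apply]

theorem AddEquiv.exists_nsmul_eq_of_snd_eq_zero {M A F : Type*} [AddCommGroup M] [AddCommGroup A]
    [DivisibleBy A ℕ] [AddCommGroup F] (e : M ≃+ A × F) {n : ℕ} (hn : n ≠ 0) {y : M}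
    (hy : (e y).2 = 0) : ∃ z, (e z).2 = 0 ∧ n • z = y := by
  refine ⟨e.symm (DivisibleBy.div (e y).1 n, 0), by simp, e.injective ?_⟩
  rw [map_nsmul, e.apply_symm_apply, Prod.smul_mk, DivisibleBy.div_cancel _ hn, smul_zero, ← hy]

theorem stmt15_general (p : ℕ) [Fact p.Prime] (t : ℕ)
    (M : Type) [AddCommGroup M]
    (F : Type) [AddCommGroup F] [Finite F]
    (e : M ≃+ (Fin t → qpModZp p) × F)
    (σ : M →+ M)
    (hker : Finite σ.ker)
    (Mdiv : AddSubgroup M)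
    (hMdiv : Mdiv = AddSubgroup.map e.symm.toAddMonoidHom
      ((⊤ : AddSubgroup (Fin t → qpModZp p)).prod (⊥ : AddSubgroup F))) :
    Mdiv ≤ σ.range ∧ Nat.card (M ⧸ σ.range) ≤ Nat.card F := by
  have hmem : ∀ x, x ∈ Mdiv ↔ (e x).2 = 0 := by
    intro x
    rw [hMdiv, map_equiv_eq_comap_symm']
    simp [mem_prod]
  have hdiv : ∀ n ≠ 0, ∀ y ∈ Mdiv, ∃ z ∈ Mdiv, n • z = y := fun n hn y hy => by
    obtain ⟨z, hz, rfl⟩ := e.exists_nsmul_eq_of_snd_eq_zero hn ((hmem y).1 hy)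
    exact ⟨z, (hmem z).2 hz, rfl⟩
  have htors : ∀ x ∈ Mdiv, ∃ n : ℕ, n • x = 0 ∧ {y : M | n • y = 0}.Finite := by
    intro x hx
    obtain ⟨m, hm⟩ := Pi.exists_pow_nsmul_eq_zero qpModZp.exists_pow_nsmul_eq_zero (e x).1
    refine ⟨p ^ m, e.injective ?_, qpModZp.finite_setOf_pow_nsmul_eq_zero_of_addEquiv e m⟩
    rw [map_nsmul, map_zero, ← Prod.mk.eta (p := e x), (hmem x).1 hx, Prod.smul_mk, hm, smul_zero,
      Prod.mk_zero_zero]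
  have := hker
  have hle : Mdiv ≤ σ.range := le_range_of_divisible σ hdiv htors
  refine ⟨hle, card_quotient_le_of_ker_le ((AddMonoidHom.snd _ F).comp e.toAddMonoidHom) ?_⟩
  exact fun x hx => hle ((hmem x).2 hx)

/-- Let `M ≅ (ℚ_p/ℤ_p)^t × F` with `F` finite, equipped with an automorphism `γ` such
that `σ = γ - 1` has finite kernel.  Then the maximal divisible subgroup
`M_div ≅ (ℚ_p/ℤ_p)^t` satisfies `M_div ⊆ (γ-1)M`, hence the cokernel
`M/(γ-1)M ≅ H^1(⟨γ⟩, M)` is finite of order at most `|F| = [M : M_div]`. -/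
theorem stmt15 (p : ℕ) [Fact p.Prime] (t : ℕ)
    (M : Type) [AddCommGroup M]
    (F : Type) [AddCommGroup F] [Finite F]
    (e : M ≃+ (Fin t → qpModZp p) × F)
    (γ : M ≃+ M) (σ : M →+ M) (hσ : ∀ x, σ x = γ x - x)
    (hker : Finite σ.ker)
    (Mdiv : AddSubgroup M)
    (hMdiv : Mdiv = AddSubgroup.map e.symm.toAddMonoidHom
      ((⊤ : AddSubgroup (Fin t → qpModZp p)).prod (⊥ : AddSubgroup F))) :
    Mdiv ≤ σ.range ∧ Nat.card (M ⧸ σ.range) ≤ Nat.card F :=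
  stmt15_general p t M F e σ hker Mdiv hMdiv
end
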